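/- Empty intersections are rare under independence and exchangeability (Lemma 3.38 of the paper): Let D_1, D_2 : Ω → Z^n and (X_{n+1},Y_{n+1}) : Ω → Z be random variables such that the two sequence-valued random variables ⟨D_1,(X_{n+1},Y_{n+1})⟩ and ⟨D_2,(X_{n+1},Y_{n+1})⟩, each valued in Z^{n+1} and appending the same final coordinate (X_{n+1},Y_{n+1}), are independent of each other and each is exchangeable. Then for every ε ∈ (0,1), the probability of observing an empty intersection of the label-wise conformal prediction sets at the test input, P( { y' ∈ Y : p_{n,A}(D_1,(X_{n+1},y')) > ε } ∩ { y' ∈ Y : p_{n,A}(D_2,(X_{n+1},y')) > ε } = ∅ ), is at most 1 − (1−ε)^2. -/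
import Mathlib


open MeasureTheory

/-- A nonconformity score on sequences of length `n+1`: measurable (jointly) and invariant
under permutations of the `n+1` coordinates of its first argument. -/
def IsNonconfScore {Z : Type*} [MeasurableSpace Z] {n : ℕ}
    (A : (Fin (n + 1) → Z) → Z → ℝ) : Prop :=
  Measurable (fun p : (Fin (n + 1) → Z) × Z => A p.1 p.2) ∧
    ∀ (σ : Equiv.Perm (Fin (n + 1))) (b : Fin (n + 1) → Z) (z : Z), A (b ∘ σ) z = A b z

/-- The conformal p-value `p_{n,A}(D, z)`. -/
noncomputable def pval {Z : Type*} {n : ℕ}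
    (A : (Fin (n + 1) → Z) → Z → ℝ) (D : Fin n → Z) (z : Z) : ℝ :=
  (Finset.univ.filter (fun i : Fin (n + 1) =>
      A (Fin.snoc D z) ((Fin.snoc D z : Fin (n + 1) → Z) i) ≥ A (Fin.snoc D z) z)).card / (n + 1)

/-- A `Z^m`-valued random variable is exchangeable if permuting its coordinates does not
change its distribution. -/
def Exchangeable {Ω Z : Type*} [MeasurableSpace Ω] [MeasurableSpace Z]
    (μ : Measure Ω) {m : ℕ} (Zs : Ω → Fin m → Z) : Prop :=
  ∀ σ : Equiv.Perm (Fin m),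
    Measure.map (fun ω => (Zs ω) ∘ σ) μ = Measure.map Zs μ

namespace ConformalAux

variable {Z : Type*} {n : ℕ}

/-- p-value of the `i`-th coordinate within a full sequence. -/
noncomputable def pv (A : (Fin (n + 1) → Z) → Z → ℝ) (b : Fin (n + 1) → Z)
    (i : Fin (n + 1)) : ℝ :=
  ((Finset.univ.filter (fun j : Fin (n + 1) => A b (b j) ≥ A b (b i))).card : ℝ) / (n + 1)

lemma pval_eq (A : (Fin (n + 1) → Z) → Z → ℝ) (D : Fin n → Z) (z : Z) :
    pval A D z = pv A (Fin.snoc D z) (Fin.last n) := by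
  unfold pval pv
  rw [Fin.snoc_last]

lemma pv_comp_perm (A : (Fin (n + 1) → Z) → Z → ℝ)
    (hA : ∀ (σ : Equiv.Perm (Fin (n + 1))) (b : Fin (n + 1) → Z) (z : Z), A (b ∘ σ) z = A b z)
    (σ : Equiv.Perm (Fin (n + 1))) (b : Fin (n + 1) → Z) (i : Fin (n + 1)) :
    pv A (b ∘ σ) i = pv A b (σ i) := by
  unfold pv
  congr 1
  have hfil : (Finset.univ.filter (fun j : Fin (n + 1) =>
      A (b ∘ σ) ((b ∘ σ) j) ≥ A (b ∘ σ) ((b ∘ σ) i))) =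
      (Finset.univ.filter (fun j : Fin (n + 1) => A b (b j) ≥ A b (b (σ i)))).map
        σ.symm.toEmbedding := by
    ext j
    simp only [Finset.mem_filter, Finset.mem_univ, true_and, Finset.mem_map,
      Equiv.coe_toEmbedding, Function.comp_apply, hA σ b]
    constructor
    · intro h
      exact ⟨σ j, h, by simp⟩
    · rintro ⟨a, ha, rfl⟩
      simpa using ha
  rw [hfil, Finset.card_map]

/-- Deterministic bound: at most `ε (n+1)` coordinates have p-value `≤ ε`. -/
lemma card_pv_le {ε : ℝ} (hε : 0 ≤ ε) (A : (Fin (n + 1) → Z) → Z → ℝ) (b : Fin (n + 1) → Z) :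
    ((Finset.univ.filter (fun i : Fin (n + 1) => pv A b i ≤ ε)).card : ℝ) ≤ ε * (n + 1) := by
  set S := Finset.univ.filter (fun i : Fin (n + 1) => pv A b i ≤ ε) with hS
  rcases S.eq_empty_or_nonempty with h | h
  · rw [h]
    simp only [Finset.card_empty, Nat.cast_zero]
    positivity
  · obtain ⟨i₀, hi₀, hmin⟩ := S.exists_min_image (fun i => A b (b i)) h
    have hsub : S ⊆ Finset.univ.filter (fun j : Fin (n + 1) => A b (b j) ≥ A b (b i₀)) := by
      intro i hi
      simp only [Finset.mem_filter, Finset.mem_univ, true_and, ge_iff_le]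
      exact hmin i hi
    have h1 : (S.card : ℝ) ≤
        ((Finset.univ.filter (fun j : Fin (n + 1) => A b (b j) ≥ A b (b i₀))).card : ℝ) := by
      exact_mod_cast Finset.card_le_card hsub
    have h2 : pv A b i₀ ≤ ε := by
      have := hi₀
      rw [hS, Finset.mem_filter] at this
      exact this.2
    unfold pv at h2
    rw [div_le_iff₀ (by positivity)] at h2
    linarith

variable [MeasurableSpace Z]

lemma measurable_pv {A : (Fin (n + 1) → Z) → Z → ℝ}
    (hm : Measurable (fun p : (Fin (n + 1) → Z) × Z => A p.1 p.2)) (i : Fin (n + 1)) :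
    Measurable (fun b : Fin (n + 1) → Z => pv A b i) := by
  have hs : ∀ j : Fin (n + 1), Measurable (fun b : Fin (n + 1) → Z => A b (b j)) := by
    intro j
    exact hm.comp (measurable_id.prodMk (measurable_pi_apply j))
  have hcnt : Measurable (fun b : Fin (n + 1) → Z =>
      ((Finset.univ.filter (fun j : Fin (n + 1) => A b (b j) ≥ A b (b i))).card : ℝ)) := by
    have : (fun b : Fin (n + 1) → Z =>
        ((Finset.univ.filter (fun j : Fin (n + 1) => A b (b j) ≥ A b (b i))).card : ℝ)) =
        fun b => ∑ j : Fin (n + 1), if A b (b j) ≥ A b (b i) then (1 : ℝ) else 0 := by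
      funext b
      rw [Finset.card_filter]
      push_cast
      rfl
    rw [this]
    exact Finset.measurable_sum _ (fun j _ =>
      Measurable.ite (measurableSet_le (hs i) (hs j)) measurable_const measurable_const)
  exact hcnt.div_const _

lemma measurableSet_pv_le {A : (Fin (n + 1) → Z) → Z → ℝ}
    (hm : Measurable (fun p : (Fin (n + 1) → Z) × Z => A p.1 p.2)) (i : Fin (n + 1)) (ε : ℝ) :
    MeasurableSet {b : Fin (n + 1) → Z | pv A b i ≤ ε} :=
  measurableSet_le (measurable_pv hm i) measurable_const

/-- Conformal validity: for an exchangeable sequence, the p-value of the last coordinate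
is `≤ ε` with probability at most `ε`. -/
lemma prob_pv_le {Ω : Type*} [MeasurableSpace Ω] (μ : Measure Ω) [IsProbabilityMeasure μ]
    {A : (Fin (n + 1) → Z) → Z → ℝ} (hA : IsNonconfScore A)
    {B : Ω → Fin (n + 1) → Z} (hB : Measurable B) (hexch : Exchangeable μ B)
    {ε : ℝ} (hε : 0 ≤ ε) :
    μ {ω | pv A (B ω) (Fin.last n) ≤ ε} ≤ ENNReal.ofReal ε := by
  set ν : Measure (Fin (n + 1) → Z) := Measure.map B μ with hν
  haveI : IsProbabilityMeasure ν := Measure.isProbabilityMeasure_map hB.aemeasurable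
  set E : Fin (n + 1) → Set (Fin (n + 1) → Z) := fun i => {b | pv A b i ≤ ε} with hE
  have hEm : ∀ i, MeasurableSet (E i) := fun i => measurableSet_pv_le hA.1 i ε
  -- all coordinates have the same probability
  have hsame : ∀ i : Fin (n + 1), ν (E i) = ν (E (Fin.last n)) := by
    intro i
    set σ : Equiv.Perm (Fin (n + 1)) := Equiv.swap (Fin.last n) i with hσ
    have mcomp : Measurable (fun b : Fin (n + 1) → Z => b ∘ σ) :=
      measurable_pi_lambda _ (fun j => measurable_pi_apply (σ j))
    have hmapσ : Measure.map (fun b : Fin (n + 1) → Z => b ∘ σ) ν = ν := by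
      rw [hν, Measure.map_map mcomp hB]
      exact hexch σ
    have key : ν (E (Fin.last n)) = ν ((fun b : Fin (n + 1) → Z => b ∘ σ) ⁻¹' E (Fin.last n)) := by
      conv_lhs => rw [← hmapσ]
      rw [Measure.map_apply mcomp (hEm (Fin.last n))]
    have hpre : (fun b : Fin (n + 1) → Z => b ∘ σ) ⁻¹' E (Fin.last n) = E i := by
      ext b
      simp only [Set.mem_preimage, hE, Set.mem_setOf_eq]
      rw [pv_comp_perm A hA.2 σ b (Fin.last n), hσ, Equiv.swap_apply_left]
    rw [key, hpre]
  -- sum of probabilities equals integral of the count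
  have hsum : ∑ i : Fin (n + 1), ν (E i) ≤ ENNReal.ofReal (ε * (n + 1)) := by
    have h1 : ∑ i : Fin (n + 1), ν (E i) =
        ∫⁻ b, ∑ i : Fin (n + 1), (E i).indicator 1 b ∂ν := by
      rw [lintegral_finset_sum _ (fun i _ => (measurable_one.indicator (hEm i)))]
      exact (Finset.sum_congr rfl (fun i _ => (lintegral_indicator_one (hEm i)).symm))
    rw [h1]
    have h2 : ∀ b : Fin (n + 1) → Z,
        ∑ i : Fin (n + 1), (E i).indicator (fun _ => (1 : ENNReal)) b ≤ ENNReal.ofReal (ε * (n + 1)) := by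
      intro b
      have hcard : ∑ i : Fin (n + 1), (E i).indicator (fun _ => (1 : ENNReal)) b =
          ((Finset.univ.filter (fun i : Fin (n + 1) => pv A b i ≤ ε)).card : ENNReal) := by
        rw [Finset.card_filter]
        push_cast
        refine Finset.sum_congr rfl (fun i _ => ?_)
        by_cases h : pv A b i ≤ ε <;> simp [Set.indicator_apply, hE, Set.mem_setOf_eq, h]
      rw [hcard]
      have hb := card_pv_le hε A b
      calc ((Finset.univ.filter (fun i : Fin (n + 1) => pv A b i ≤ ε)).card : ENNReal)
          = ENNReal.ofReal ((Finset.univ.filter (fun i : Fin (n + 1) => pv A b i ≤ ε)).card : ℝ) := by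
            rw [ENNReal.ofReal_natCast]
        _ ≤ ENNReal.ofReal (ε * (n + 1)) := ENNReal.ofReal_le_ofReal hb
    calc ∫⁻ b, ∑ i : Fin (n + 1), (E i).indicator 1 b ∂ν
        ≤ ∫⁻ _, ENNReal.ofReal (ε * (n + 1)) ∂ν := lintegral_mono (fun b => h2 b)
      _ = ENNReal.ofReal (ε * (n + 1)) := by simp
  -- so (n+1) * ν (E last) ≤ (n+1) * ofReal ε
  have hsum2 : ∑ i : Fin (n + 1), ν (E i) = (n + 1 : ENNReal) * ν (E (Fin.last n)) := by
    rw [Finset.sum_congr rfl (fun i _ => hsame i), Finset.sum_const, Finset.card_univ,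
      Fintype.card_fin, nsmul_eq_mul]
    push_cast
    ring
  have hofr : ENNReal.ofReal (ε * (n + 1)) = (n + 1 : ENNReal) * ENNReal.ofReal ε := by
    rw [mul_comm ε]
    rw [ENNReal.ofReal_mul (by positivity)]
    congr 1
    rw [show ((n : ℝ) + 1) = ((n + 1 : ℕ) : ℝ) by push_cast; ring, ENNReal.ofReal_natCast]
    push_cast
    ring
  have hfin : (n + 1 : ENNReal) * ν (E (Fin.last n)) ≤ (n + 1 : ENNReal) * ENNReal.ofReal ε := by
    rw [← hsum2, ← hofr]; exact hsum
  have hlast : ν (E (Fin.last n)) ≤ ENNReal.ofReal ε := by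
    rwa [ENNReal.mul_le_mul_iff_right (by simp) (by simp)] at hfin
  have : μ {ω | pv A (B ω) (Fin.last n) ≤ ε} = ν (E (Fin.last n)) := by
    rw [hν, Measure.map_apply hB (hEm (Fin.last n))]
    rfl
  rw [this]
  exact hlast

end ConformalAux

open ConformalAux

/-- Empty intersections are rare under independence and exchangeability: if
`⟨D₁,(X_{n+1},Y_{n+1})⟩` and `⟨D₂,(X_{n+1},Y_{n+1})⟩` are independent of each other and
each exchangeable, then for every `ε ∈ (0,1)` the probability that the label-wise conformal
prediction sets `Γ^ε(D₁)(X_{n+1})` and `Γ^ε(D₂)(X_{n+1})` are disjoint is at most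
`1 - (1-ε)²`. -/
theorem empty_intersection_is_rare
    {Ω X Y : Type*} [MeasurableSpace Ω] [MeasurableSpace X] [MeasurableSpace Y]
    [Fintype Y] [Nonempty Y]
    (μ : Measure Ω) [IsProbabilityMeasure μ] {n : ℕ}
    (A : (Fin (n + 1) → X × Y) → (X × Y) → ℝ) (hA : IsNonconfScore A)
    (D₁ D₂ : Ω → Fin n → X × Y) (T : Ω → X × Y)
    (hD₁ : Measurable D₁) (hD₂ : Measurable D₂) (hT : Measurable T)
    (hind : ProbabilityTheory.IndepFun
      (fun ω => (Fin.snoc (D₁ ω) (T ω) : Fin (n + 1) → X × Y))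
      (fun ω => (Fin.snoc (D₂ ω) (T ω) : Fin (n + 1) → X × Y)) μ)
    (hexch₁ : Exchangeable μ (fun ω => (Fin.snoc (D₁ ω) (T ω) : Fin (n + 1) → X × Y)))
    (hexch₂ : Exchangeable μ (fun ω => (Fin.snoc (D₂ ω) (T ω) : Fin (n + 1) → X × Y)))
    (ε : ℝ) (hε : ε ∈ Set.Ioo (0 : ℝ) 1) :
    μ {ω | {y' : Y | pval A (D₁ ω) ((T ω).1, y') > ε} ∩
        {y' : Y | pval A (D₂ ω) ((T ω).1, y') > ε} = ∅} ≤
      ENNReal.ofReal (1 - (1 - ε) ^ 2) := by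
  obtain ⟨hε0, hε1⟩ := hε
  set B₁ : Ω → Fin (n + 1) → X × Y := fun ω => Fin.snoc (D₁ ω) (T ω) with hB₁def
  set B₂ : Ω → Fin (n + 1) → X × Y := fun ω => Fin.snoc (D₂ ω) (T ω) with hB₂def
  have hBmeas : ∀ (D : Ω → Fin n → X × Y), Measurable D →
      Measurable (fun ω => (Fin.snoc (D ω) (T ω) : Fin (n + 1) → X × Y)) := by
    intro D hD
    refine measurable_pi_lambda _ (fun j => ?_)
    refine Fin.lastCases ?_ (fun i => ?_) j
    · simp only [Fin.snoc_last]
      exact hT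
    · simp only [Fin.snoc_castSucc]
      exact (measurable_pi_apply i).comp hD
  have hB₁ : Measurable B₁ := hBmeas D₁ hD₁
  have hB₂ : Measurable B₂ := hBmeas D₂ hD₂
  -- the "bad" set in sequence space
  set s : Set (Fin (n + 1) → X × Y) := {b | pv A b (Fin.last n) ≤ ε} with hsdef
  have hsm : MeasurableSet s := measurableSet_pv_le hA.1 (Fin.last n) ε
  set G₁ : Set Ω := B₁ ⁻¹' sᶜ with hG₁def
  set G₂ : Set Ω := B₂ ⁻¹' sᶜ with hG₂def
  -- probability bounds on G₁, G₂
  have hG : ∀ (B : Ω → Fin (n + 1) → X × Y), Measurable B → Exchangeable μ B →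
      ENNReal.ofReal (1 - ε) ≤ μ (B ⁻¹' sᶜ) := by
    intro B hB hexch
    have h1 : μ (B ⁻¹' s) ≤ ENNReal.ofReal ε := prob_pv_le μ hA hB hexch hε0.le
    have h2 : μ (B ⁻¹' sᶜ) = 1 - μ (B ⁻¹' s) := by
      rw [Set.preimage_compl]
      exact prob_compl_eq_one_sub (hsm.preimage hB)
    rw [h2, ENNReal.ofReal_sub 1 hε0.le, ENNReal.ofReal_one]
    exact tsub_le_tsub_left h1 1
  have hG₁le := hG B₁ hB₁ hexch₁
  have hG₂le := hG B₂ hB₂ hexch₂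
  -- independence : μ (G₁ ∩ G₂) = μ G₁ * μ G₂
  have hmul : μ (G₁ ∩ G₂) = μ G₁ * μ G₂ :=
    hind.measure_inter_preimage_eq_mul sᶜ sᶜ hsm.compl hsm.compl
  have hprod : ENNReal.ofReal ((1 - ε) ^ 2) ≤ μ (G₁ ∩ G₂) := by
    rw [hmul, sq, ENNReal.ofReal_mul (by linarith)]
    exact mul_le_mul' hG₁le hG₂le
  -- the event is contained in (G₁ ∩ G₂)ᶜ
  have hsub : {ω | {y' : Y | pval A (D₁ ω) ((T ω).1, y') > ε} ∩
      {y' : Y | pval A (D₂ ω) ((T ω).1, y') > ε} = ∅} ⊆ (G₁ ∩ G₂)ᶜ := by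
    intro ω hω
    simp only [Set.mem_setOf_eq] at hω
    intro hmem
    obtain ⟨h1, h2⟩ := hmem
    have hy1 : pval A (D₁ ω) ((T ω).1, (T ω).2) > ε := by
      have : ¬ pv A (B₁ ω) (Fin.last n) ≤ ε := h1
      rw [← pval_eq] at this
      simpa using lt_of_not_ge this
    have hy2 : pval A (D₂ ω) ((T ω).1, (T ω).2) > ε := by
      have : ¬ pv A (B₂ ω) (Fin.last n) ≤ ε := h2
      rw [← pval_eq] at this
      simpa using lt_of_not_ge this
    have : (T ω).2 ∈ ({y' : Y | pval A (D₁ ω) ((T ω).1, y') > ε} ∩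
        {y' : Y | pval A (D₂ ω) ((T ω).1, y') > ε}) := ⟨hy1, hy2⟩
    rw [hω] at this
    exact this
  calc μ {ω | {y' : Y | pval A (D₁ ω) ((T ω).1, y') > ε} ∩
        {y' : Y | pval A (D₂ ω) ((T ω).1, y') > ε} = ∅}
      ≤ μ ((G₁ ∩ G₂)ᶜ) := measure_mono hsub
    _ = 1 - μ (G₁ ∩ G₂) := prob_compl_eq_one_sub
        (((hsm.compl.preimage hB₁)).inter ((hsm.compl.preimage hB₂)))
    _ ≤ 1 - ENNReal.ofReal ((1 - ε) ^ 2) := tsub_le_tsub_left hprod 1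
    _ = ENNReal.ofReal (1 - (1 - ε) ^ 2) := by
        rw [ENNReal.ofReal_sub 1 (by positivity), ENNReal.ofReal_one]
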